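/- arXiv:1409.1198 — 2 statements merged into one kernel-verified Lean document; each statement's English description precedes it below -/
import Mathlib

section
/- For a linear category 𝒞, the trace of its additive closure is isomorphic to the trace of 𝒞: Tr(𝒞^⊕) ≅ Tr(𝒞). -/
/-!
The embedding `C ⥤ Mat_ C` induces `Tr(C) → Tr(Mat_ C)`. In the other direction, send the class
of a matrix `M` to `∑ i, [M i i]`; this respects the relations because
`∑ i, [(f ≫ g) i i] = ∑ i j, [f i j ≫ g j i] = ∑ j, [(g ≫ f) j j]`. The two maps are mutually
inverse because every object of `Mat_ C` is the biproduct of its entries: if `∑ i, p i ≫ q i = 𝟙`,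
then `[M] = ∑ i, [(M ≫ p i) ≫ q i] = ∑ i, [q i ≫ M ≫ p i]`, and `q i ≫ M ≫ p i` is the entry `M i i`.
-/

open CategoryTheory
open scoped DirectSum Classical

noncomputable section

/-- The relations `f ≫ g - g ≫ f` defining the trace of a linear category. -/
def traceRelations (C : Type*) [Category C] [Preadditive C] :
    AddSubgroup (⨁ x : C, (x ⟶ x)) :=
  AddSubgroup.closure
    { h | ∃ (x y : C) (f : x ⟶ y) (g : y ⟶ x),
        h = DirectSum.of (fun z : C => z ⟶ z) x (f ≫ g)
          - DirectSum.of (fun z : C => z ⟶ z) y (g ≫ f) }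

/-- The trace of a linear category, `Tr(𝒞) = (⊕_x 𝒞(x,x)) / Span{fg − gf}`. -/
abbrev CatTrace (C : Type*) [Category C] [Preadditive C] :=
  (⨁ x : C, (x ⟶ x)) ⧸ traceRelations C

/-- The class `[f]` of an endomorphism in the trace of the category. -/
def traceClass {C : Type*} [Category C] [Preadditive C] {x : C} (f : x ⟶ x) :
    CatTrace C :=
  QuotientAddGroup.mk (DirectSum.of (fun z : C => z ⟶ z) x f)

namespace CatTrace

universe v u v' u' w

variable {C : Type u} [Category.{v} C] [Preadditive C]

def classHom (x : C) : (x ⟶ x) →+ CatTrace C :=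
  (QuotientAddGroup.mk' (traceRelations C)).comp (DirectSum.of (fun z : C => z ⟶ z) x)

@[simp]
lemma classHom_apply {x : C} (f : x ⟶ x) : classHom x f = traceClass f := rfl

lemma traceClass_sum {ι : Type*} (s : Finset ι) {x : C} (f : ι → (x ⟶ x)) :
    traceClass (∑ i ∈ s, f i) = ∑ i ∈ s, traceClass (f i) :=
  map_sum (classHom x) f s

lemma traceClass_comp_comm {x y : C} (f : x ⟶ y) (g : y ⟶ x) :
    traceClass (f ≫ g) = traceClass (g ≫ f) :=
  QuotientAddGroup.eq_iff_sub_mem.mpr (AddSubgroup.subset_closure ⟨x, y, f, g, rfl⟩)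

lemma traceClass_eq_sum_of_sum_comp_eq_id {X : C} {ι : Type*} [Fintype ι] {Y : ι → C}
    (p : ∀ i, X ⟶ Y i) (q : ∀ i, Y i ⟶ X) (hpq : ∑ i, p i ≫ q i = 𝟙 X) (M : X ⟶ X) :
    traceClass M = ∑ i, traceClass (q i ≫ M ≫ p i) := by
  calc traceClass M = traceClass (∑ i, (M ≫ p i) ≫ q i) := by
        simp only [Category.assoc, ← Preadditive.comp_sum, hpq, Category.comp_id]
    _ = ∑ i, traceClass (q i ≫ M ≫ p i) := by
        simp only [traceClass_sum, traceClass_comp_comm (_ ≫ p _)]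

variable {A : Type w} [AddCommGroup A]

def lift (φ : ∀ x : C, (x ⟶ x) →+ A)
    (hφ : ∀ (x y : C) (f : x ⟶ y) (g : y ⟶ x), φ x (f ≫ g) = φ y (g ≫ f)) :
    CatTrace C →+ A :=
  QuotientAddGroup.lift _ (DirectSum.toAddMonoid φ) <| by
    rw [traceRelations, AddSubgroup.closure_le]
    rintro _ ⟨x, y, f, g, rfl⟩
    simp [hφ]

@[simp]
lemma lift_traceClass (φ : ∀ x : C, (x ⟶ x) →+ A)
    (hφ : ∀ (x y : C) (f : x ⟶ y) (g : y ⟶ x), φ x (f ≫ g) = φ y (g ≫ f)) {x : C}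
    (f : x ⟶ x) : lift φ hφ (traceClass f) = φ x f :=
  DirectSum.toAddMonoid_of φ x f

lemma hom_ext {φ ψ : CatTrace C →+ A}
    (h : ∀ (x : C) (f : x ⟶ x), φ (traceClass f) = ψ (traceClass f)) : φ = ψ :=
  QuotientAddGroup.addMonoidHom_ext _ <| DirectSum.addHom_ext h

def map {D : Type u'} [Category.{v'} D] [Preadditive D] (F : C ⥤ D) [F.Additive] :
    CatTrace C →+ CatTrace D :=
  lift (fun x => (classHom (F.obj x)).comp F.mapAddHom) fun x y f g => by
    simp [traceClass_comp_comm]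

@[simp]
lemma map_traceClass {D : Type u'} [Category.{v'} D] [Preadditive D] (F : C ⥤ D) [F.Additive]
    {x : C} (f : x ⟶ x) : map F (traceClass f) = traceClass (F.map f) := by
  simp [map]

open Limits in
lemma traceClass_eq_sum_of_iso_biproduct {X : C} {ι : Type} [Fintype ι] {Y : ι → C}
    [HasBiproduct Y] (e : X ≅ biproduct Y) (M : X ⟶ X) :
    traceClass M =
      ∑ i, traceClass ((biproduct.ι Y i ≫ e.inv) ≫ M ≫ e.hom ≫ biproduct.π Y i) := by
  refine traceClass_eq_sum_of_sum_comp_eq_id (fun i => e.hom ≫ biproduct.π Y i) _ ?_ M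
  calc ∑ i, (e.hom ≫ biproduct.π Y i) ≫ biproduct.ι Y i ≫ e.inv
      = e.hom ≫ (∑ i, biproduct.π Y i ≫ biproduct.ι Y i) ≫ e.inv := by
        simp only [Preadditive.comp_sum, Preadditive.sum_comp, Category.assoc]
    _ = 𝟙 X := by rw [biproduct.total, Category.id_comp, e.hom_inv_id]

open Limits in
lemma traceClass_mat_eq_sum_diag {X : Mat_ C} (M : X ⟶ X) :
    traceClass M = ∑ i, traceClass ((Mat_.embedding C).map (M i i)) := by
  rw [traceClass_eq_sum_of_iso_biproduct (Mat_.isoBiproductEmbedding X) M]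
  refine Finset.sum_congr rfl fun i _ => congrArg traceClass ?_
  erw [Mat_.isoBiproductEmbedding_hom, Mat_.isoBiproductEmbedding_inv, biproduct.ι_desc,
    biproduct.lift_π]
  ext ⟨⟩ ⟨⟩
  change ∑ j, (if h : i = j then eqToHom (congrArg X.X h) else 0) ≫
    ∑ k, M j k ≫ (if h : k = i then eqToHom (congrArg X.X h) else 0) = M i i
  simp [dite_comp, comp_dite]

def diagSum (X : Mat_ C) : (X ⟶ X) →+ CatTrace C :=
  ∑ i, (classHom (X.X i)).comp (AddMonoidHom.mk' (fun M : X ⟶ X => M i i) fun _ _ => rfl)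

@[simp]
lemma diagSum_apply {X : Mat_ C} (M : X ⟶ X) : diagSum X M = ∑ i, traceClass (M i i) := by
  simp only [diagSum, AddMonoidHom.finsetSum_apply]
  rfl

lemma diagSum_comp_comm {X Y : Mat_ C} (f : X ⟶ Y) (g : Y ⟶ X) :
    diagSum X (f ≫ g) = diagSum Y (g ≫ f) := by
  simp only [diagSum_apply, Mat_.comp_apply, traceClass_sum, traceClass_comp_comm (f _ _)]
  exact Finset.sum_comm

def ofMat : CatTrace (Mat_ C) →+ CatTrace C :=
  lift diagSum fun _ _ => diagSum_comp_comm

lemma ofMat_comp_map_embedding : ofMat.comp (map (Mat_.embedding C)) = .id _ := by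
  refine hom_ext fun x f => ?_
  simp only [ofMat, AddMonoidHom.comp_apply, map_traceClass, lift_traceClass, diagSum_apply]
  exact Fintype.sum_unique (ι := PUnit) fun _ => traceClass f

lemma map_embedding_comp_ofMat : (map (Mat_.embedding C)).comp ofMat = .id _ := by
  refine hom_ext fun X M => ?_
  conv_rhs => rw [traceClass_mat_eq_sum_diag M]
  simp [ofMat]

end CatTrace

/-- The trace of the additive closure (matrix category) of a linear category `𝒞`
is isomorphic to the trace of `𝒞`: `Tr(𝒞^⊕) ≅ Tr(𝒞)`. -/
theorem catTrace_additiveClosure (C : Type) [Category C] [Preadditive C] :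
    ∃ e : CatTrace C ≃+ CatTrace (Mat_ C),
      ∀ {x : C} (f : x ⟶ x),
        e (traceClass f) = traceClass ((Mat_.embedding C).map f) :=
  ⟨(CatTrace.map (Mat_.embedding C)).toAddEquiv CatTrace.ofMat
      CatTrace.ofMat_comp_map_embedding CatTrace.map_embedding_comp_ofMat,
    CatTrace.map_traceClass _⟩
end
end

section
/- The traced Euler characteristic of a bounded complex over a linear category is a homotopy invariant: if complexes A and B over 𝒞 are chain homotopy equivalent, then Σᵢ (−1)ⁱ [1_{Aᵢ}] = Σᵢ (−1)ⁱ [1_{Bᵢ}] in Tr(𝒞). -/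
open CategoryTheory
open scoped DirectSum Classical

noncomputable section

open CategoryTheory.Limits

/-!
A homotopy `h` between endomorphisms `f, g` of a complex gives
`f i = d h + h d + g i`, and the trace identity `[h d] = [d h]` turns the two homotopy terms
into consecutive values `φ i`, `φ (i + 1)` of the single function `φ j = [d_j h_{j-1}]`.
With the signs `(-1)^i` the correction terms telescope, so homotopic endomorphisms have the
same alternating trace. Applied to a homotopy equivalence `u, v`, this gives
`χ_tr(A) = Σ (-1)^i [vᵢ uᵢ] = Σ (-1)^i [uᵢ vᵢ] = χ_tr(B)`.
-/

theorem finsum_sub_comp_add_one_eq_zero {M : Type*} [AddCommGroup M] {F : ℤ → M}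
    (hF : (Function.support F).Finite) : ∑ᶠ i, (F i - F (i + 1)) = 0 := by
  have hF' : (Function.support fun i => F (i + 1)).Finite :=
    hF.preimage (add_left_injective 1).injOn
  rw [finsum_sub_distrib hF hF', ← finsum_comp_equiv (Equiv.addRight (1 : ℤ))]
  exact sub_self _

section Trace

variable {C : Type*} [Category C] [Preadditive C]

@[simp]
theorem traceClass_add {x : C} (f g : x ⟶ x) :
    traceClass (f + g) = traceClass f + traceClass g := by
  simp only [traceClass, map_add, QuotientAddGroup.mk_add]

@[simp]
theorem traceClass_zero (x : C) : traceClass (0 : x ⟶ x) = 0 := by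
  simp only [traceClass, map_zero, QuotientAddGroup.mk_zero]

theorem traceClass_of_isZero {x : C} (hx : IsZero x) (f : x ⟶ x) : traceClass f = 0 := by
  rw [hx.eq_of_src f 0, traceClass_zero]

theorem traceClass_comp_comm {x y : C} (f : x ⟶ y) (g : y ⟶ x) :
    traceClass (f ≫ g) = traceClass (g ≫ f) :=
  QuotientAddGroup.eq_iff_sub_mem.mpr (AddSubgroup.subset_closure ⟨x, y, f, g, rfl⟩)

end Trace

section Homotopy

variable {C : Type*} [Category C] [Preadditive C] {A : HomologicalComplex C (ComplexShape.down ℤ)}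
  {f g : A ⟶ A}

def Homotopy.traceTerm (H : Homotopy f g) (j : ℤ) : CatTrace C :=
  traceClass (A.d j (j - 1) ≫ H.hom (j - 1) j)

theorem Homotopy.traceTerm_add_one (H : Homotopy f g) (i : ℤ) :
    H.traceTerm (i + 1) = traceClass (A.d (i + 1) i ≫ H.hom i (i + 1)) := by
  rw [Homotopy.traceTerm, add_sub_cancel_right]

theorem Homotopy.traceClass_f_eq (H : Homotopy f g) (i : ℤ) :
    traceClass (f.f i) = H.traceTerm i + H.traceTerm (i + 1) + traceClass (g.f i) := by
  have hcomm := H.comm i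
  rw [dNext_eq _ (show (ComplexShape.down ℤ).Rel i (i - 1) by simp),
    prevD_eq _ (show (ComplexShape.down ℤ).Rel (i + 1) i by simp)] at hcomm
  rw [hcomm, traceClass_add, traceClass_add, traceClass_comp_comm (H.hom i (i + 1)),
    H.traceTerm_add_one, Homotopy.traceTerm]

theorem Homotopy.sum_negOnePow_smul_traceClass_eq (H : Homotopy f g) (s : Finset ℤ)
    (hA : ∀ i ∉ s, IsZero (A.X i)) :
    ∑ i ∈ s, (i.negOnePow : ℤ) • traceClass (f.f i) =
      ∑ i ∈ s, (i.negOnePow : ℤ) • traceClass (g.f i) := by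
  set F : ℤ → CatTrace C := fun j => (j.negOnePow : ℤ) • H.traceTerm j
  have hstep : ∀ i, (i.negOnePow : ℤ) • traceClass (f.f i) =
      (i.negOnePow : ℤ) • traceClass (g.f i) + (F i - F (i + 1)) := by
    intro i
    simp only [F, H.traceClass_f_eq i, Int.negOnePow_succ, Units.val_neg, neg_smul, smul_add]
    abel
  have hF : ∀ i ∉ s, F i = 0 ∧ F (i + 1) = 0 := by
    intro i hi
    refine ⟨?_, ?_⟩
    · simp only [F, Homotopy.traceTerm, traceClass_of_isZero (hA i hi), smul_zero]
    · simp only [F, H.traceTerm_add_one, (hA i hi).eq_of_src (H.hom i _) 0, comp_zero,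
        traceClass_zero, smul_zero]
  have hsupp : Function.support F ⊆ s := Function.support_subset_iff'.mpr fun i hi => (hF i hi).1
  have htelescope : ∑ i ∈ s, (F i - F (i + 1)) = 0 := by
    rw [← finsum_eq_sum_of_support_subset _ (Function.support_subset_iff'.mpr fun i hi => by
      rw [(hF i hi).1, (hF i hi).2, sub_zero])]
    exact finsum_sub_comp_add_one_eq_zero ((s.finite_toSet).subset hsupp)
  rw [Finset.sum_congr rfl fun i _ => hstep i, Finset.sum_add_distrib, htelescope, add_zero]

end Homotopy

/-- The traced Euler characteristic of a bounded complex over a linear category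
is a homotopy invariant: if bounded complexes `A` and `B` are chain homotopy
equivalent, then `Σᵢ (−1)ⁱ [1_{Aᵢ}] = Σᵢ (−1)ⁱ [1_{Bᵢ}]` in `Tr(𝒞)`. -/
theorem tracedEuler_homotopy_invariant {C : Type*} [Category C] [Preadditive C]
    (A B : HomologicalComplex C (ComplexShape.down ℤ))
    (e : HomotopyEquiv A B)
    (s t : Finset ℤ) (hA : ∀ i ∉ s, IsZero (A.X i)) (hB : ∀ i ∉ t, IsZero (B.X i)) :
    ∑ i ∈ s, (Int.negOnePow i : ℤ) • traceClass (𝟙 (A.X i)) =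
      ∑ i ∈ t, (Int.negOnePow i : ℤ) • traceClass (𝟙 (B.X i)) := by
  have hA' := e.homotopyHomInvId.sum_negOnePow_smul_traceClass_eq s hA
  have hB' := e.homotopyInvHomId.sum_negOnePow_smul_traceClass_eq t hB
  simp only [HomologicalComplex.id_f] at hA' hB'
  rw [← hA', ← hB']
  refine Finset.sum_congr_of_eq_on_inter (fun i _ hi => ?_) (fun i _ hi => ?_) (fun i _ _ => ?_)
  · rw [HomologicalComplex.comp_f, traceClass_comp_comm, traceClass_of_isZero (hB i hi), smul_zero]
  · rw [HomologicalComplex.comp_f, traceClass_comp_comm, traceClass_of_isZero (hA i hi), smul_zero]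
  · rw [HomologicalComplex.comp_f, HomologicalComplex.comp_f, traceClass_comp_comm]
end
end
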